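/- arXiv:2504.01518 — 2 statements merged into one kernel-verified Lean document; each statement's English description precedes it below -/
import Mathlib

section
/- For all integers i, j ≥ 1, the integer m_{i,j} is divisible by 7^{max(0, ⌊(7j − 2i − 1)/4⌋)}; that is, the 7-adic valuation of m_{i,j} is at least ⌊(7j − 2i − 1)/4⌋ whenever m_{i,j} ≠ 0. -/
open PowerSeries

/-- `p1 ℓ n` is the number of 2-color partitions of `n` in which one of the two colors
only occurs on parts that are multiples of `ℓ`: pairs `(λ, μ)` of partitions with
`|λ| + |μ| = n` and all parts of `μ` divisible by `ℓ`. -/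
def p1 (ℓ n : ℕ) : ℕ :=
  ∑ ab ∈ Finset.HasAntidiagonal.antidiagonal n,
    Fintype.card (Nat.Partition ab.1) *
      Fintype.card {p : Nat.Partition ab.2 // ∀ i ∈ p.parts, ℓ ∣ i}

/-- `fps r = f_r = ∏_{m ≥ 1} (1 - q^{r m})` as a formal power series over `ℤ`;
its `n`-th coefficient agrees with that of the finite partial product up to `m = n`. -/
noncomputable def fps (r : ℕ) : PowerSeries ℤ :=
  PowerSeries.mk fun n =>
    PowerSeries.coeff (R := ℤ) n (∏ m ∈ Finset.Icc 1 n, (1 - (PowerSeries.X : PowerSeries ℤ) ^ (r * m)))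

/-- `fpsinv r = 1 / f_r`, the multiplicative inverse of `fps r` (whose constant term is `1`). -/
noncomputable def fpsinv (r : ℕ) : PowerSeries ℤ :=
  PowerSeries.invOfUnit (fps r) 1

/-- The "huffing" operator modulo 7: `huff (∑ a_n q^n) = ∑ a_{7n} q^{7n}`. -/
noncomputable def huff (F : PowerSeries ℤ) : PowerSeries ℤ :=
  PowerSeries.mk fun n => if 7 ∣ n then PowerSeries.coeff (R := ℤ) n F else 0

/-- The explicit rows `1 ≤ i ≤ 7` of the matrix `m_{i,j}` (row `i` has length `2 i`,
and `m_{i,j} = 0` for `j > 2 i`). -/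
def mrow : ℕ → List ℤ
  | 1 => [7, 7^2]
  | 2 => [10, 9*7^2, 2*7^4, 7^5]
  | 3 => [3, 114*7, 85*7^3, 24*7^5, 3*7^7, 7^8]
  | 4 => [0, 82*7, 176*7^3, 845*7^4, 272*7^6, 46*7^8, 4*7^10, 7^11]
  | 5 => [0, 190, 1265*7^2, 1895*7^4, 1233*7^6, 3025*7^7, 620*7^9, 75*7^11, 5*7^13, 7^14]
  | 6 => [0, 27, 736*7^2, 16782*7^3, 20424*7^5, 12825*7^7, 4770*7^9, 7830*7^10, 1178*7^12,
      111*7^14, 6*7^16, 7^17]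
  | 7 => [0, 1, 253*7^2, 1902*7^4, 4246*7^6, 31540*7^7, 19302*7^9, 7501*7^11, 1944*7^13,
      2397*7^14, 285*7^16, 22*7^18, 7^20, 7^20]
  | _ => []

/-- The matrix `m_{i,j}` (for `i, j ≥ 1`): explicit values in rows `1 ≤ i ≤ 7`,
`m_{i,1} = 0` for `i ≥ 4`, `m_{i,2} = 0` for `i ≥ 8`, and for `i ≥ 8`, `j ≥ 3` the
recurrence of Garvan. -/
def mval (i j : ℕ) : ℤ :=
  if _h : i = 0 ∨ j = 0 then 0
  else if i ≤ 7 then (mrow i).getD (j - 1) 0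
  else if j ≤ 2 then 0
  else
    7 * mval (i-3) (j-1) + 35 * mval (i-2) (j-1) + 49 * mval (i-1) (j-1)
      + mval (i-7) (j-2) + 7 * mval (i-6) (j-2) + 21 * mval (i-5) (j-2)
      + 49 * mval (i-4) (j-2) + 147 * mval (i-3) (j-2) + 343 * mval (i-2) (j-2)
      + 343 * mval (i-1) (j-2)
termination_by j
decreasing_by all_goals omega

/-- The vectors `x_k = (x_{k,1}, x_{k,2}, …)`: `x_1 = (7, 7², 0, …)` and
`x_{k+1,i} = ∑_{j ≥ 1} x_{k,j} m_{4j, j+i}` for `k` odd,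
`x_{k+1,i} = ∑_{j ≥ 1} x_{k,j} m_{4j+1, j+i}` for `k` even (the sums have finite support). -/
noncomputable def xv : ℕ → ℕ → ℤ
  | 0, _ => 0
  | 1, i => if i = 1 then 7 else if i = 2 then 7^2 else 0
  | k+2, i =>
    if (k+1) % 2 = 1 then ∑ᶠ j : ℕ, xv (k+1) (j+1) * mval (4*(j+1)) ((j+1)+i)
    else ∑ᶠ j : ℕ, xv (k+1) (j+1) * mval (4*(j+1)+1) ((j+1)+i)

/-- `yodd k β j = y^{(2k-1)}_{β,j}`: `y^{(2k-1)}_{1,j} = x_{2k-1,j}` and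
`y^{(2k-1)}_{β+1,j} = ∑_{i ≥ 1} y^{(2k-1)}_{β,i} m_{4i+1, i+j}`. -/
noncomputable def yodd (k : ℕ) : ℕ → ℕ → ℤ
  | 0, _ => 0
  | 1, j => xv (2*k-1) j
  | β+2, j => ∑ᶠ i : ℕ, yodd k (β+1) (i+1) * mval (4*(i+1)+1) ((i+1)+j)

/-- `yeven k β j = y^{(2k)}_{β,j}`: `y^{(2k)}_{1,j} = x_{2k-1,j}` and
`y^{(2k)}_{β+1,j} = ∑_{i ≥ 1} y^{(2k)}_{β,i} m_{4i, i+j}` for `β` odd,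
`y^{(2k)}_{β+1,j} = ∑_{i ≥ 1} y^{(2k)}_{β,i} m_{4i+2, i+j}` for `β` even. -/
noncomputable def yeven (k : ℕ) : ℕ → ℕ → ℤ
  | 0, _ => 0
  | 1, j => xv (2*k-1) j
  | β+2, j =>
    if (β+1) % 2 = 1 then ∑ᶠ i : ℕ, yeven k (β+1) (i+1) * mval (4*(i+1)) ((i+1)+j)
    else ∑ᶠ i : ℕ, yeven k (β+1) (i+1) * mval (4*(i+1)+2) ((i+1)+j)

/-- `lam k = λ_k`, the unique integer with `0 < λ_k < 7^k` and `24 λ_k ≡ 1 (mod 7^k)`. -/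
noncomputable def lam (k : ℕ) : ℕ := ((24 : ZMod (7^k))⁻¹).val

private lemma fdiv_toNat_le_aux (t s : ℤ) (c : ℕ) (h : t ≤ 4 * c + s) :
    (t.fdiv 4).toNat ≤ c + (s.fdiv 4).toNat := by
  have h1 := Int.fmod_add_mul_fdiv s 4
  have h2 := Int.fmod_add_mul_fdiv t 4
  have h3 : 0 ≤ s.fmod 4 := Int.fmod_nonneg_of_pos s (by norm_num)
  have h4 : s.fmod 4 < 4 := Int.fmod_lt_of_pos s (by norm_num)
  have h5 : 0 ≤ t.fmod 4 := Int.fmod_nonneg_of_pos t (by norm_num)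
  have h6 : t.fmod 4 < 4 := Int.fmod_lt_of_pos t (by norm_num)
  omega

private lemma term_dvd_aux (t s : ℤ) (c : ℕ) (v x : ℤ) (hv : (7:ℤ)^c ∣ v)
    (hts : t ≤ 4 * c + s) (hd : (7:ℤ)^((s.fdiv 4).toNat) ∣ x) :
    (7:ℤ)^((t.fdiv 4).toNat) ∣ v * x := by
  have h := fdiv_toNat_le_aux t s c hts
  calc (7:ℤ)^((t.fdiv 4).toNat) ∣ 7^(c + (s.fdiv 4).toNat) := pow_dvd_pow _ h
    _ ∣ v * x := by rw [pow_add]; exact mul_dvd_mul hv hd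

/-- For all `i, j ≥ 1`, `m_{i,j}` is divisible by `7^{max(0, ⌊(7j − 2i − 1)/4⌋)}`. -/
theorem mval_seven_adic_valuation (i j : ℕ) (hi : 1 ≤ i) (hj : 1 ≤ j) :
    (7 : ℤ) ^ ((7 * (j : ℤ) - 2 * (i : ℤ) - 1).fdiv 4).toNat ∣ mval i j := by
  suffices H : ∀ j i : ℕ, 1 ≤ i → 1 ≤ j →
      (7 : ℤ) ^ ((7 * (j : ℤ) - 2 * (i : ℤ) - 1).fdiv 4).toNat ∣ mval i j from H j i hi hj
  intro j
  induction j using Nat.strong_induction_on with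
  | _ j IH =>
  intro i hi hj
  rcases le_or_gt i 7 with h7 | h7
  · rcases le_or_gt j (2*i) with hj2 | hj2
    · interval_cases i <;> interval_cases j <;> rw [mval.eq_def] <;> norm_num [mrow] <;> decide
    · have hz : mval i j = 0 := by
        rw [mval.eq_def, dif_neg (by omega), if_pos h7]
        apply List.getD_eq_default
        interval_cases i <;> simp [mrow] <;> omega
      rw [hz]; exact dvd_zero _
  · rcases le_or_gt j 2 with hj2 | hj2
    · have hz : mval i j = 0 := by
        rw [mval.eq_def, dif_neg (by omega), if_neg (by omega), if_pos hj2]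
      rw [hz]; exact dvd_zero _
    · rw [mval.eq_def, dif_neg (by omega), if_neg (by omega), if_neg (by omega)]
      have H1 := IH (j-1) (by omega) (i-3) (by omega) (by omega)
      have H2 := IH (j-1) (by omega) (i-2) (by omega) (by omega)
      have H3 := IH (j-1) (by omega) (i-1) (by omega) (by omega)
      have H4 := IH (j-2) (by omega) (i-7) (by omega) (by omega)
      have H5 := IH (j-2) (by omega) (i-6) (by omega) (by omega)
      have H6 := IH (j-2) (by omega) (i-5) (by omega) (by omega)
      have H7 := IH (j-2) (by omega) (i-4) (by omega) (by omega)
      have H8 := IH (j-2) (by omega) (i-3) (by omega) (by omega)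
      have H9 := IH (j-2) (by omega) (i-2) (by omega) (by omega)
      have H10 := IH (j-2) (by omega) (i-1) (by omega) (by omega)
      refine dvd_add (dvd_add (dvd_add (dvd_add (dvd_add (dvd_add (dvd_add (dvd_add (dvd_add
        ?_ ?_) ?_) ?_) ?_) ?_) ?_) ?_) ?_) ?_
      · exact term_dvd_aux _ _ 1 _ _ (by norm_num) (by omega) H1
      · exact term_dvd_aux _ _ 1 _ _ ⟨5, by norm_num⟩ (by omega) H2
      · exact term_dvd_aux _ _ 2 _ _ (by norm_num) (by omega) H3
      · have := term_dvd_aux (7 * (j:ℤ) - 2 * (i:ℤ) - 1) _ 0 1 _ (by norm_num)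
          (by omega) H4
        simpa using this
      · exact term_dvd_aux _ _ 1 _ _ (by norm_num) (by omega) H5
      · exact term_dvd_aux _ _ 1 _ _ ⟨3, by norm_num⟩ (by omega) H6
      · exact term_dvd_aux _ _ 2 _ _ (by norm_num) (by omega) H7
      · exact term_dvd_aux _ _ 2 _ _ ⟨3, by norm_num⟩ (by omega) H8
      · exact term_dvd_aux _ _ 3 _ _ (by norm_num) (by omega) H9
      · exact term_dvd_aux _ _ 3 _ _ (by norm_num) (by omega) H10
end

section
/- For all integers j, k ≥ 1 and every integer β ≥ 0, the integer y^{(2k)}_{2β+2,j} is divisible by 7^{k + β + 1 + ⌊(7j − 6)/4⌋}. -/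
open PowerSeries

private lemma dvd_finsum' {d : ℤ} (f : ℕ → ℤ) (h : ∀ n, d ∣ f n) : d ∣ ∑ᶠ n, f n := by
  by_cases hf : (Function.support f).Finite
  · rw [finsum_eq_sum f hf]
    exact Finset.dvd_sum fun i _ => h i
  · rw [finsum_of_infinite_support hf]
    exact dvd_zero d

private lemma key {C x : ℤ} {a b e : ℕ} (hC : (7:ℤ)^a ∣ C) (hx : (7:ℤ)^b ∣ x)
    (he : e ≤ a + b) : (7:ℤ)^e ∣ C * x :=
  (pow_dvd_pow 7 he).trans (by rw [pow_add]; exact mul_dvd_mul hC hx)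

private lemma mval_dvd : ∀ j i, (7:ℤ) ^ ((7*j - (2*i+1))/4) ∣ mval i j := by
  intro j
  induction j using Nat.strong_induction_on with
  | _ j ih =>
  intro i
  rw [mval]
  split
  · exact dvd_zero _
  next h0 =>
  split
  next hi7 =>
    have hi1 : 1 ≤ i := by omega
    have hj1 : 1 ≤ j := by omega
    have hlen : (mrow i).length ≤ 14 := by interval_cases i <;> simp [mrow]
    rcases le_or_gt j 14 with hj | hj
    · interval_cases i <;> interval_cases j <;> norm_num [mrow]
    · rw [List.getD_eq_default _ _ (by omega)]
      exact dvd_zero _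
  next hi7 =>
  split
  · exact dvd_zero _
  next hj2 =>
    have hi8 : 8 ≤ i := by omega
    have hj3 : 3 ≤ j := by omega
    have h1 := ih (j-1) (by omega) (i-3)
    have h2 := ih (j-1) (by omega) (i-2)
    have h3 := ih (j-1) (by omega) (i-1)
    have h4 := ih (j-2) (by omega) (i-7)
    have h5 := ih (j-2) (by omega) (i-6)
    have h6 := ih (j-2) (by omega) (i-5)
    have h7 := ih (j-2) (by omega) (i-4)
    have h8 := ih (j-2) (by omega) (i-3)
    have h9 := ih (j-2) (by omega) (i-2)
    have h10 := ih (j-2) (by omega) (i-1)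
    refine dvd_add (dvd_add (dvd_add (dvd_add (dvd_add (dvd_add (dvd_add (dvd_add (dvd_add
      ?_ ?_) ?_) ?_) ?_) ?_) ?_) ?_) ?_) ?_
    · exact key (by norm_num : (7:ℤ)^1 ∣ 7) h1 (by omega)
    · exact key (by norm_num : (7:ℤ)^1 ∣ 35) h2 (by omega)
    · exact key (by norm_num : (7:ℤ)^2 ∣ 49) h3 (by omega)
    · exact (pow_dvd_pow 7 (by omega)).trans h4
    · exact key (by norm_num : (7:ℤ)^1 ∣ 7) h5 (by omega)
    · exact key (by norm_num : (7:ℤ)^1 ∣ 21) h6 (by omega)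
    · exact key (by norm_num : (7:ℤ)^2 ∣ 49) h7 (by omega)
    · exact key (by norm_num : (7:ℤ)^2 ∣ 147) h8 (by omega)
    · exact key (by norm_num : (7:ℤ)^3 ∣ 343) h9 (by omega)
    · exact key (by norm_num : (7:ℤ)^3 ∣ 343) h10 (by omega)


private lemma ineqA (i j : ℕ) (hi : 1 ≤ i) :
    (7*i-2)/4 ≤ (7*(j+1)-7)/4 + (7*((j+1)+i) - (2*(4*(j+1))+1))/4 := by
  rw [show 7*(j+1)-7 = 7*j from by omega,
      show 7*((j+1)+i) - (2*(4*(j+1))+1) = 7*i - (j+2) from by omega]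
  rcases le_or_gt (7*i) (j+2) with h | h
  · rw [Nat.sub_eq_zero_of_le h]; omega
  · rcases Nat.eq_zero_or_pos j with rfl | hj <;> omega

private lemma ineqB (i j : ℕ) (hi : 1 ≤ i) :
    (7*i-7)/4 + 1 ≤ (7*(j+1)-2)/4 + (7*((j+1)+i) - (2*(4*(j+1)+2)+1))/4 := by
  rw [show 7*(j+1)-2 = 7*j+5 from by omega,
      show 7*((j+1)+i) - (2*(4*(j+1)+2)+1) = 7*i - (j+6) from by omega]
  rcases le_or_gt (7*i) (j+6) with h | h
  · rw [Nat.sub_eq_zero_of_le h]; omega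
  · rcases Nat.eq_zero_or_pos j with rfl | hj <;> omega

private lemma ineqC (i j : ℕ) (hi : 1 ≤ i) :
    (7*i-7)/4 + 1 ≤ (7*(j+1)-2)/4 + (7*((j+1)+i) - (2*(4*(j+1)+1)+1))/4 := by
  rw [show 7*(j+1)-2 = 7*j+5 from by omega,
      show 7*((j+1)+i) - (2*(4*(j+1)+1)+1) = 7*i - (j+4) from by omega]
  rcases le_or_gt (7*i) (j+4) with h | h
  · rw [Nat.sub_eq_zero_of_le h]; omega
  · rcases Nat.eq_zero_or_pos j with rfl | hj <;> omega

/-- Step via `m_{4i, i+j}`. -/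
private lemma stepA (c : ℕ) (x : ℕ → ℤ) (h : ∀ j, 1 ≤ j → (7:ℤ)^(c + (7*j-7)/4) ∣ x j)
    (i : ℕ) (hi : 1 ≤ i) :
    (7:ℤ)^(c + (7*i-2)/4) ∣ ∑ᶠ j : ℕ, x (j+1) * mval (4*(j+1)) ((j+1)+i) :=
  dvd_finsum' _ fun j =>
    key (h (j+1) (by omega)) (mval_dvd ((j+1)+i) (4*(j+1)))
      (by have := ineqA i j hi; omega)

/-- Step via `m_{4i+1, i+j}`. -/
private lemma stepC (c : ℕ) (x : ℕ → ℤ) (h : ∀ j, 1 ≤ j → (7:ℤ)^(c + (7*j-2)/4) ∣ x j)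
    (i : ℕ) (hi : 1 ≤ i) :
    (7:ℤ)^(c + 1 + (7*i-7)/4) ∣ ∑ᶠ j : ℕ, x (j+1) * mval (4*(j+1)+1) ((j+1)+i) :=
  dvd_finsum' _ fun j =>
    key (h (j+1) (by omega)) (mval_dvd ((j+1)+i) (4*(j+1)+1))
      (by have := ineqC i j hi; omega)

/-- Step via `m_{4i+2, i+j}`. -/
private lemma stepB (c : ℕ) (x : ℕ → ℤ) (h : ∀ j, 1 ≤ j → (7:ℤ)^(c + (7*j-2)/4) ∣ x j)
    (i : ℕ) (hi : 1 ≤ i) :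
    (7:ℤ)^(c + 1 + (7*i-7)/4) ∣ ∑ᶠ j : ℕ, x (j+1) * mval (4*(j+1)+2) ((j+1)+i) :=
  dvd_finsum' _ fun j =>
    key (h (j+1) (by omega)) (mval_dvd ((j+1)+i) (4*(j+1)+2))
      (by have := ineqB i j hi; omega)

private lemma xv_dvd (k : ℕ) (hk : 1 ≤ k) :
    (∀ j, 1 ≤ j → (7:ℤ)^(k + (7*j-7)/4) ∣ xv (2*k-1) j) ∧
    (∀ j, 1 ≤ j → (7:ℤ)^(k + (7*j-2)/4) ∣ xv (2*k) j) := by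
  induction k with
  | zero => omega
  | succ k ih =>
    have odd : ∀ j, 1 ≤ j → (7:ℤ)^(k + 1 + (7*j-7)/4) ∣ xv (2*(k+1)-1) j := by
      rcases Nat.eq_zero_or_pos k with rfl | hk0
      · intro j hj
        show (7:ℤ)^(0 + 1 + (7*j-7)/4) ∣ xv 1 j
        rw [xv]
        rcases Nat.lt_or_ge j 3 with hj3 | hj3
        · interval_cases j <;> norm_num
        · rw [if_neg (by omega), if_neg (by omega)]
          exact dvd_zero _
      · intro j hj
        have hx : xv (2*(k+1)-1) j = ∑ᶠ i : ℕ, xv (2*k) (i+1) * mval (4*(i+1)+1) ((i+1)+j) := by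
          have : 2*(k+1)-1 = (2*k-1) + 2 := by omega
          rw [this, xv, if_neg (by omega)]
          have : 2*k-1+1 = 2*k := by omega
          rw [this]
        rw [hx]
        exact stepC k _ ((ih hk0).2) j hj
    refine ⟨odd, fun j hj => ?_⟩
    have hx : xv (2*(k+1)) j = ∑ᶠ i : ℕ, xv (2*(k+1)-1) (i+1) * mval (4*(i+1)) ((i+1)+j) := by
      have h2 : 2*(k+1) = (2*(k+1)-2) + 2 := by omega
      rw [h2, xv, if_pos (by omega)]
      simp only [show 2*(k+1)-2+2-1 = 2*(k+1)-1 from by omega,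
        show 2*(k+1)-2+1 = 2*(k+1)-1 from by omega]
    rw [hx]
    exact stepA (k+1) _ odd j hj

private lemma yeven_dvd (k : ℕ) (hk : 1 ≤ k) (β : ℕ) :
    (∀ j, 1 ≤ j → (7:ℤ)^(k + β + (7*j-7)/4) ∣ yeven k (2*β+1) j) ∧
    (∀ j, 1 ≤ j → (7:ℤ)^(k + β + (7*j-2)/4) ∣ yeven k (2*β+2) j) := by
  induction β with
  | zero =>
    have odd : ∀ j, 1 ≤ j → (7:ℤ)^(k + 0 + (7*j-7)/4) ∣ yeven k 1 j := by
      intro j hj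
      show (7:ℤ)^(k + 0 + (7*j-7)/4) ∣ xv (2*k-1) j
      exact (pow_dvd_pow 7 (by omega)).trans ((xv_dvd k hk).1 j hj)
    refine ⟨odd, fun j hj => ?_⟩
    have hx : yeven k 2 j = ∑ᶠ i : ℕ, yeven k 1 (i+1) * mval (4*(i+1)) ((i+1)+j) := by
      rw [show (2:ℕ) = 0 + 2 from rfl, yeven, if_pos (by omega)]
    rw [hx]
    exact stepA (k+0) _ odd j hj
  | succ β ih =>
    have odd : ∀ j, 1 ≤ j → (7:ℤ)^(k + (β+1) + (7*j-7)/4) ∣ yeven k (2*(β+1)+1) j := by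
      intro j hj
      have hx : yeven k (2*(β+1)+1) j
          = ∑ᶠ i : ℕ, yeven k (2*β+2) (i+1) * mval (4*(i+1)+2) ((i+1)+j) := by
        have h2 : 2*(β+1)+1 = (2*β+1) + 2 := by omega
        rw [h2, yeven, if_neg (by omega)]
      rw [hx]
      have := stepB (k+β) _ ih.2 j hj
      exact (pow_dvd_pow 7 (by omega)).trans this
    refine ⟨odd, fun j hj => ?_⟩
    have hx : yeven k (2*(β+1)+2) j
        = ∑ᶠ i : ℕ, yeven k (2*(β+1)+1) (i+1) * mval (4*(i+1)) ((i+1)+j) := by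
      have h2 : 2*(β+1)+2 = (2*(β+1)) + 2 := by omega
      rw [h2, yeven, if_pos (by omega)]
    rw [hx]
    exact stepA (k+(β+1)) _ odd j hj

/-- For all `j, k ≥ 1` and `β ≥ 0`, `y^{(2k)}_{2β+2,j}` is divisible by
`7^{k + β + 1 + ⌊(7j − 6)/4⌋}`. -/
theorem yeven_seven_adic_valuation_even_index (j k β : ℕ) (hj : 1 ≤ j) (hk : 1 ≤ k) :
    (7 : ℤ) ^ (k + β + 1 + (7 * j - 6) / 4) ∣ yeven k (2 * β + 2) j := by
  have h := (yeven_dvd k hk β).2 j hj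
  have : 2 * β + 2 = 2*β+2 := by ring
  exact (pow_dvd_pow 7 (by omega)).trans h
end
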